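/- arXiv:math/0108091 — 2 statements merged into one kernel-verified Lean document; each statement's English description precedes it below -/
import Mathlib

section
/- Any nilpotent group of orientation-preserving C² diffeomorphisms of the closed interval [0,1] is abelian. -/
/-!
Kopell's lemma: let `f` be a `C²` diffeomorphism of an interval that fixes `P` and moves every
point of `(P, Q)` towards `P`, and let a `C¹` diffeomorphism `g` commuting with `f` fix a point of
`(P, Q)`. Then `g` fixes `(P, Q)` pointwise. Indeed `g` fixes an `f`-orbit accumulating at `P`, so
`g'(P) = 1`; differentiating `gᵏ ∘ fⁿ = fⁿ ∘ gᵏ` and using that `log f'` is Lipschitz (bounded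
distortion of `fⁿ` on a fundamental domain) gives `(gᵏ)' ≥ exp (-C (Q - P))` there for every `k`,
which is incompatible with the convergence of the orbit `gᵏ x₀` of a point moved by `g`.

Let `c = ⁅a, b⁆` be central with `c x₀ ≠ x₀`, and let `(p, q)` be the component of the non-fixed
points of `c` containing `x₀`. By Kopell's lemma every element of the group fixes `p` and `q` and
acts on `(p, q)` either trivially or without fixed points, so `g y ≤ h y` at one point `y` of
`(p, q)` implies it on all of `(p, q)`. Say `c > id` on `(p, q)` (otherwise swap `a` and `b`), and
choose `k` with `cᵏ x₀ ≤ b x₀ < cᵏ⁺¹ x₀`. Since `a b a⁻¹ = c b`, this gives `cᵏ⁺¹ y ≤ b y` at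
`y = a⁻¹ x₀`, hence at `x₀`: a contradiction. So central commutators are trivial, which in a
nilpotent group forces all commutators to be trivial.
-/

open Set

/-- `f` is an orientation-preserving `C^n` diffeomorphism of the set `s ⊆ ℝ`
onto itself: it maps `s` bijectively onto `s`, is `C^n` on `s`, and has
everywhere positive derivative on `s` (hence is orientation-preserving).
Note that when such maps form a group, the inverse map, which is again a
member of the group, is automatically `C^n` as well. -/
def IsDiffeoOn (n : WithTop ℕ∞) (s : Set ℝ) (f : ℝ → ℝ) : Prop :=
  Set.InjOn f s ∧ f '' s = s ∧ ContDiffOn ℝ n f s ∧ ∀ x ∈ s, 0 < derivWithin f s x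


open Filter Topology Function
open scoped commutatorElement

section Iterate

variable {α : Type*} {f g : α → α} {s : Set α}

lemma iterate_apply_comm (hf : MapsTo f s s) (hcomm : ∀ x ∈ s, g (f x) = f (g x)) (n : ℕ) :
    ∀ x ∈ s, g (f^[n] x) = f^[n] (g x) := by
  induction n with
  | zero => simp
  | succ n ih =>
    intro x hx
    rw [iterate_succ_apply', iterate_succ_apply', hcomm _ (hf.iterate n hx), ih x hx]

lemma MonotoneOn.monotone_iterate_of_le_map [Preorder α] (hf : MonotoneOn f s) (hs : MapsTo f s s)
    {x : α} (hx : x ∈ s) (hxf : x ≤ f x) : Monotone fun n => f^[n] x := by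
  refine monotone_nat_of_le_succ fun n => ?_
  induction n with
  | zero => simpa using hxf
  | succ n ih =>
    rw [iterate_succ_apply' f n, iterate_succ_apply' f (n + 1)]
    exact hf (hs.iterate n hx) (hs.iterate (n + 1) hx) ih

lemma MonotoneOn.antitone_iterate_of_map_le [Preorder α] (hf : MonotoneOn f s) (hs : MapsTo f s s)
    {x : α} (hx : x ∈ s) (hxf : f x ≤ x) : Antitone fun n => f^[n] x :=
  hf.dual.monotone_iterate_of_le_map hs hx hxf

lemma mapsTo_Icc_of_forall_lt [PartialOrder α] {P A : α} (hf : MonotoneOn f (Icc P A))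
    (hP : f P = P) (hlt : ∀ x ∈ Ioc P A, f x < x) : MapsTo f (Icc P A) (Icc P A) := by
  intro x hx
  have hPA : P ≤ A := hx.1.trans hx.2
  refine ⟨hP ▸ hf ⟨le_rfl, hPA⟩ hx hx.1, ?_⟩
  rcases hx.1.eq_or_lt with h | h
  · rw [← h, hP]; exact hPA
  · exact (hlt x ⟨h, hx.2⟩).le.trans hx.2

lemma iterate_mem_Ioc_of_forall_lt [PartialOrder α] {P A : α} (hf : StrictMonoOn f (Icc P A))
    (hP : f P = P) (hlt : ∀ x ∈ Ioc P A, f x < x) (hPA : P < A) (n : ℕ) : f^[n] A ∈ Ioc P A := by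
  induction n with
  | zero => exact ⟨hPA, le_rfl⟩
  | succ n ih =>
    rw [iterate_succ_apply']
    exact ⟨hP.symm.trans_lt (hf ⟨le_rfl, hPA.le⟩ (Ioc_subset_Icc_self ih) ih.1),
      (hlt _ ih).le.trans ih.2⟩

lemma exists_lt_le_of_exists_lt [LinearOrder α] {u : ℕ → α} {x : α} (h0 : x ≤ u 0)
    (h : ∃ n, u n < x) : ∃ m, u (m + 1) < x ∧ x ≤ u m := by
  classical
  have hn : Nat.find h ≠ 0 := fun h' => (h' ▸ Nat.find_spec h).not_ge h0
  refine ⟨Nat.find h - 1, ?_, not_lt.1 (Nat.find_min h (Nat.sub_one_lt hn))⟩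
  rw [Nat.sub_one_add_one hn]
  exact Nat.find_spec h

lemma exists_le_lt_add_one_of_monotone [LinearOrder α] {ψ : ℤ → α} (hψ : Monotone ψ) {y : α}
    (hlo : ∃ k, ψ k ≤ y) (hhi : ∃ n, y < ψ n) : ∃ k, ψ k ≤ y ∧ y < ψ (k + 1) := by
  obtain ⟨n, hn⟩ := hhi
  obtain ⟨k, hk, hmax⟩ := Int.exists_greatest_of_bdd
    ⟨n, fun k hk => le_of_lt (lt_of_not_ge fun h => (hn.trans_le (hψ h)).not_ge hk)⟩ hlo
  exact ⟨k, hk, lt_of_not_ge fun h => (hmax (k + 1) h).not_gt (lt_add_one k)⟩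

end Iterate

section OrderTopology

variable {α : Type*} [ConditionallyCompleteLinearOrder α] [TopologicalSpace α] [OrderTopology α]
  {f : α → α}

lemma exists_tendsto_iterate {a b x : α} (hf : MonotoneOn f (Icc a b))
    (hmaps : MapsTo f (Icc a b) (Icc a b)) (hx : x ∈ Icc a b) :
    ∃ L ∈ Icc a b, Tendsto (fun n => f^[n] x) atTop (𝓝 L) := by
  have hmem : ∀ n, f^[n] x ∈ Icc a b := fun n => hmaps.iterate n hx
  obtain ⟨L, hL⟩ : ∃ L, Tendsto (fun n => f^[n] x) atTop (𝓝 L) := by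
    rcases le_total x (f x) with h | h
    · exact ⟨_, tendsto_atTop_ciSup (hf.monotone_iterate_of_le_map hmaps hx h)
        ⟨b, forall_mem_range.2 fun n => (hmem n).2⟩⟩
    · exact ⟨_, tendsto_atTop_ciInf (hf.antitone_iterate_of_map_le hmaps hx h)
        ⟨a, forall_mem_range.2 fun n => (hmem n).1⟩⟩
  exact ⟨L, isClosed_Icc.mem_of_tendsto hL (Eventually.of_forall hmem), hL⟩

lemma tendsto_iterate_of_forall_lt {P A : α} (hcont : ContinuousOn f (Icc P A))
    (hf : MonotoneOn f (Icc P A)) (hP : f P = P) (hlt : ∀ x ∈ Ioc P A, f x < x) {x : α}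
    (hx : x ∈ Icc P A) : Tendsto (fun n => f^[n] x) atTop (𝓝 P) := by
  have hsub : Icc P x ⊆ Icc P A := Icc_subset_Icc_right hx.2
  have hmaps : MapsTo f (Icc P x) (Icc P x) :=
    mapsTo_Icc_of_forall_lt (hf.mono hsub) hP fun y hy => hlt y ⟨hy.1, hy.2.trans hx.2⟩
  obtain ⟨L, hL, hlim⟩ := exists_tendsto_iterate (hf.mono hsub) hmaps ⟨hx.1, le_rfl⟩
  have hfix : f L = L := by
    have hwithin : Tendsto (fun n => f^[n] x) atTop (𝓝[Icc P A] L) :=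
      tendsto_nhdsWithin_iff.2 ⟨hlim, Eventually.of_forall fun n =>
        hsub (hmaps.iterate n ⟨hx.1, le_rfl⟩)⟩
    refine tendsto_nhds_unique ((hcont L (hsub hL)).tendsto.comp hwithin) ?_
    simpa only [comp_def, ← iterate_succ_apply' f] using (tendsto_add_atTop_iff_nat 1).2 hlim
  rcases hL.1.eq_or_lt with h | h
  · rwa [← h] at hlim
  · exact absurd hfix (hlt L ⟨h, hL.2.trans hx.2⟩).ne

lemma forall_lt_or_forall_gt_of_forall_ne [DenselyOrdered α] {P Q : α}
    (hf : ContinuousOn f (Ioo P Q)) (hne : ∀ x ∈ Ioo P Q, f x ≠ x) :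
    (∀ x ∈ Ioo P Q, f x < x) ∨ (∀ x ∈ Ioo P Q, x < f x) := by
  by_contra! h
  obtain ⟨⟨x, hx, hxf⟩, ⟨y, hy, hyf⟩⟩ := h
  obtain ⟨z, hz, hfz⟩ :=
    isPreconnected_Ioo.intermediate_value₂ hy hx hf continuousOn_id hyf hxf
  exact hne z hz hfz

lemma exists_Ioo_fixedPt_free {a b x : α} (hf : ContinuousOn f (Icc a b)) (ha : f a = a)
    (hb : f b = b) (hx : x ∈ Icc a b) (hfx : f x ≠ x) :
    ∃ p q, a ≤ p ∧ p < x ∧ x < q ∧ q ≤ b ∧ f p = p ∧ f q = q ∧ ∀ y ∈ Ioo p q, f y ≠ y := by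
  set E := {y ∈ Icc a x | f y = id y}
  set F := {y ∈ Icc x b | f y = id y}
  have hEbdd : BddAbove E := ⟨x, fun y hy => hy.1.2⟩
  have hFbdd : BddBelow F := ⟨x, fun y hy => hy.1.1⟩
  have haE : a ∈ E := ⟨⟨le_rfl, hx.1⟩, ha⟩
  have hbF : b ∈ F := ⟨⟨hx.2, le_rfl⟩, hb⟩
  obtain ⟨⟨hap, hpx⟩, hp⟩ := (isClosed_Icc.isClosed_eq
    (hf.mono (Icc_subset_Icc_right hx.2)) continuousOn_id).csSup_mem ⟨a, haE⟩ hEbdd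
  obtain ⟨⟨hxq, hqb⟩, hq⟩ := (isClosed_Icc.isClosed_eq
    (hf.mono (Icc_subset_Icc_left hx.1)) continuousOn_id).csInf_mem ⟨b, hbF⟩ hFbdd
  refine ⟨sSup E, sInf F, hap, hpx.lt_of_ne ?_, hxq.lt_of_ne ?_, hqb, hp, hq, ?_⟩
  · intro h; exact hfx (h ▸ hp)
  · intro h; exact hfx (h ▸ hq)
  · intro y hy hfy
    rcases le_total y x with hyx | hxy
    · exact (le_csSup hEbdd ⟨⟨hap.trans hy.1.le, hyx⟩, hfy⟩).not_gt hy.1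
    · exact (csInf_le hFbdd ⟨⟨hxy, hy.2.le.trans hqb⟩, hfy⟩).not_gt hy.2

end OrderTopology

section Deriv

variable {s : Set ℝ} {f h : ℝ → ℝ} {P : ℝ}

lemma hasDerivWithinAt_iterate {f' : ℝ → ℝ} (hf : ∀ x ∈ s, HasDerivWithinAt f (f' x) s x)
    (hs : MapsTo f s s) (n : ℕ) :
    ∀ x ∈ s, HasDerivWithinAt f^[n] (∏ i ∈ Finset.range n, f' (f^[i] x)) s x := by
  induction n with
  | zero => intro x _; simpa using hasDerivWithinAt_id x s
  | succ n ih =>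
    intro x hx
    rw [iterate_succ', Finset.prod_range_succ, mul_comm]
    exact (hf _ (hs.iterate n hx)).comp x (ih x hx) (hs.iterate n)

lemma mul_prod_deriv_iterate_eq_of_commute (hs : UniqueDiffOn ℝ s) {f' h' : ℝ → ℝ}
    (hf : ∀ x ∈ s, HasDerivWithinAt f (f' x) s x) (hfs : MapsTo f s s)
    (hh : ∀ x ∈ s, HasDerivWithinAt h (h' x) s x) (hhs : MapsTo h s s)
    (hcomm : ∀ x ∈ s, h (f x) = f (h x)) (n : ℕ) {x : ℝ} (hx : x ∈ s) :
    h' (f^[n] x) * ∏ i ∈ Finset.range n, f' (f^[i] x)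
      = (∏ i ∈ Finset.range n, f' (f^[i] (h x))) * h' x := by
  have hcomp := (hh _ (hfs.iterate n hx)).comp x (hasDerivWithinAt_iterate hf hfs n x hx)
    (hfs.iterate n)
  have hcomp' := (hasDerivWithinAt_iterate hf hfs n _ (hhs hx)).comp x (hh x hx) hhs
  exact (hs x hx).eq_deriv _ hcomp (hcomp'.congr (fun y hy => iterate_apply_comm hfs hcomm n y hy)
    (iterate_apply_comm hfs hcomm n x hx))

lemma HasDerivWithinAt.eq_one_of_tendsto_fixedPt {d : ℝ} {u : ℕ → ℝ}
    (hd : HasDerivWithinAt h d s P) (hP : h P = P) (hu : Tendsto u atTop (𝓝 P))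
    (hus : ∀ n, u n ∈ s \ {P}) (hfix : ∀ n, h (u n) = u n) : d = 1 := by
  have hslope := (hasDerivWithinAt_iff_tendsto_slope.1 hd).comp
    (tendsto_nhdsWithin_iff.2 ⟨hu, Eventually.of_forall hus⟩)
  refine tendsto_nhds_unique hslope (tendsto_const_nhds.congr fun n => ?_)
  rw [comp_apply, slope_def_field, hfix, hP, div_self (sub_ne_zero.2 (hus n).2)]

lemma log_prod_sub_log_prod_le {f' : ℝ → ℝ} {C : NNReal}
    (hlog : LipschitzOnWith C (fun x => Real.log (f' x)) s) (hpos : ∀ x ∈ s, 0 < f' x)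
    (hs : MapsTo f s s) {x y : ℝ} (hx : x ∈ s) (hy : y ∈ s) (n : ℕ) :
    Real.log (∏ i ∈ Finset.range n, f' (f^[i] x)) - Real.log (∏ i ∈ Finset.range n, f' (f^[i] y))
      ≤ C * ∑ i ∈ Finset.range n, |f^[i] x - f^[i] y| := by
  rw [Real.log_prod fun i _ => (hpos _ (hs.iterate i hx)).ne',
    Real.log_prod fun i _ => (hpos _ (hs.iterate i hy)).ne', ← Finset.sum_sub_distrib,
    Finset.mul_sum]
  refine Finset.sum_le_sum fun i _ => (le_abs_self _).trans ?_
  simpa only [Real.dist_eq] using hlog.dist_le_mul _ (hs.iterate i hx) _ (hs.iterate i hy)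

lemma mul_abs_sub_le_abs_sub {h' : ℝ → ℝ} {c d m : ℝ}
    (hh : ∀ x ∈ s, HasDerivWithinAt h (h' x) s x) (hsub : Icc c d ⊆ s)
    (hm : ∀ x ∈ Icc c d, m ≤ h' x) {x y : ℝ} (hx : x ∈ Icc c d) (hy : y ∈ Icc c d) :
    m * |y - x| ≤ |h y - h x| := by
  wlog hxy : x ≤ y generalizing x y
  · rw [abs_sub_comm, abs_sub_comm (h y)]
    exact this hy hx (le_of_not_ge hxy)
  have hderiv : ∀ w ∈ interior (Icc c d), HasDerivAt h (h' w) w := fun w hw =>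
    (hh w (hsub (interior_subset hw))).hasDerivAt
      (mem_of_superset (isOpen_interior.mem_nhds hw) (interior_subset.trans hsub))
  have hmvt := (convex_Icc c d).mul_sub_le_image_sub_of_le_deriv
    (fun w hw => (hh w (hsub hw)).continuousWithinAt.mono hsub)
    (fun w hw => (hderiv w hw).differentiableAt.differentiableWithinAt)
    (fun w hw => (hderiv w hw).deriv ▸ hm w (interior_subset hw)) x hx y hy hxy
  rw [abs_of_nonneg (sub_nonneg.2 hxy)]
  exact hmvt.trans (le_abs_self _)

end Deriv

namespace IsDiffeoOn

variable {n : WithTop ℕ∞} {s : Set ℝ} {f : ℝ → ℝ} {a b : ℝ}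

lemma of_le {m : WithTop ℕ∞} (hf : IsDiffeoOn n s f) (hmn : m ≤ n) : IsDiffeoOn m s f :=
  ⟨hf.1, hf.2.1, hf.2.2.1.of_le hmn, hf.2.2.2⟩

lemma mapsTo (hf : IsDiffeoOn n s f) : MapsTo f s s :=
  fun _ hx => hf.2.1.subset (mem_image_of_mem f hx)

lemma hasDerivWithinAt (hf : IsDiffeoOn n s f) {x : ℝ} (hx : x ∈ s) :
    HasDerivWithinAt f (derivWithin f s x) s x :=
  (differentiableWithinAt_of_derivWithin_ne_zero (hf.2.2.2 x hx).ne').hasDerivWithinAt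

lemma continuousOn (hf : IsDiffeoOn n s f) : ContinuousOn f s :=
  fun _ hx => (hf.hasDerivWithinAt hx).continuousWithinAt

lemma strictMonoOn (hf : IsDiffeoOn n s f) (hs : Convex ℝ s) : StrictMonoOn f s := by
  refine strictMonoOn_of_deriv_pos hs hf.continuousOn fun x hx => ?_
  rw [((hf.hasDerivWithinAt (interior_subset hx)).hasDerivAt
    (mem_interior_iff_mem_nhds.1 hx)).deriv]
  exact hf.2.2.2 x (interior_subset hx)

lemma apply_left (hf : IsDiffeoOn n (Icc a b) f) (hab : a ≤ b) : f a = a := by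
  have ha := left_mem_Icc.2 hab
  obtain ⟨y, hy, hya⟩ : a ∈ f '' Icc a b := hf.2.1.symm ▸ ha
  exact le_antisymm (((hf.strictMonoOn (convex_Icc a b)).monotoneOn ha hy hy.1).trans_eq hya)
    (hf.mapsTo ha).1

lemma apply_right (hf : IsDiffeoOn n (Icc a b) f) (hab : a ≤ b) : f b = b := by
  have hb := right_mem_Icc.2 hab
  obtain ⟨y, hy, hyb⟩ : b ∈ f '' Icc a b := hf.2.1.symm ▸ hb
  exact le_antisymm (hf.mapsTo hb).2
    (hyb.symm.trans_le ((hf.strictMonoOn (convex_Icc a b)).monotoneOn hy hb hy.2))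

lemma iterate (hf : IsDiffeoOn n s f) (hs : UniqueDiffOn ℝ s) (k : ℕ) : IsDiffeoOn n s f^[k] := by
  refine ⟨hf.1.iterate hf.mapsTo k, by rw [image_iterate_eq, iterate_fixed hf.2.1], ?_,
    fun x hx => ?_⟩
  · induction k with
    | zero => exact contDiffOn_id
    | succ k ih => rw [iterate_succ']; exact hf.2.2.1.comp ih (hf.mapsTo.iterate k)
  · rw [(hasDerivWithinAt_iterate (fun _ => hf.hasDerivWithinAt) hf.mapsTo k x hx).derivWithin
      (hs x hx)]
    exact Finset.prod_pos fun i _ => hf.2.2.2 _ (hf.mapsTo.iterate i hx)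

lemma exists_lipschitzOnWith_log_derivWithin (hf : IsDiffeoOn 2 (Icc a b) f) (hab : a < b) :
    ∃ C, LipschitzOnWith C (fun x => Real.log (derivWithin f (Icc a b) x)) (Icc a b) :=
  ((hf.2.2.1.derivWithin (uniqueDiffOn_Icc hab) (by norm_num)).log
    fun x hx => (hf.2.2.2 x hx).ne').exists_lipschitzOnWith one_ne_zero (convex_Icc a b)
    isCompact_Icc

end IsDiffeoOn

section Kopell

variable {a b P Q A : ℝ} {f g h : ℝ → ℝ}

lemma sum_abs_iterate_sub_le (hf : MonotoneOn f (Icc P A))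
    (hmaps : MapsTo f (Icc P A) (Icc P A)) {z x y : ℝ} (hz : z ∈ Icc P A)
    (hx : x ∈ Icc (f z) z) (hy : y ∈ Icc (f z) z) (n : ℕ) :
    ∑ i ∈ Finset.range n, |f^[i] x - f^[i] y| ≤ A - P := by
  have hdomain : Icc (f z) z ⊆ Icc P A := Icc_subset_Icc (hmaps hz).1 hz.2
  have hmem : ∀ i, ∀ w ∈ Icc (f z) z, f^[i] w ∈ Icc (f^[i + 1] z) (f^[i] z) := by
    intro i
    induction i with
    | zero => intro w hw; simpa using hw
    | succ i ih =>
      intro w hw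
      have hw' := ih w hw
      rw [iterate_succ_apply' f i z] at hw'
      rw [iterate_succ_apply' f i w, iterate_succ_apply' f (i + 1) z, iterate_succ_apply' f i z]
      have hiz := hmaps.iterate i hz
      have hiw := hmaps.iterate i (hdomain hw)
      exact ⟨hf (hmaps hiz) hiw hw'.1, hf hiw hiz hw'.2⟩
  calc ∑ i ∈ Finset.range n, |f^[i] x - f^[i] y|
      ≤ ∑ i ∈ Finset.range n, (f^[i] z - f^[i + 1] z) := by
        refine Finset.sum_le_sum fun i _ => ?_
        obtain ⟨hx₁, hx₂⟩ := hmem i x hx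
        obtain ⟨hy₁, hy₂⟩ := hmem i y hy
        exact abs_sub_le_iff.2 ⟨by linarith, by linarith⟩
    _ = z - f^[n] z := Finset.sum_range_sub' (fun i => f^[i] z) n
    _ ≤ A - P := by linarith [hz.2, (hmaps.iterate n hz).1]

lemma prod_derivWithin_iterate_le {C : NNReal} (hf : IsDiffeoOn 1 (Icc a b) f)
    (hlog : LipschitzOnWith C (fun x => Real.log (derivWithin f (Icc a b) x)) (Icc a b))
    (hsub : Icc P A ⊆ Icc a b) (hmaps : MapsTo f (Icc P A) (Icc P A)) {z x y : ℝ}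
    (hz : z ∈ Icc P A) (hx : x ∈ Icc (f z) z) (hy : y ∈ Icc (f z) z) (n : ℕ) :
    ∏ i ∈ Finset.range n, derivWithin f (Icc a b) (f^[i] x)
      ≤ Real.exp (C * (A - P)) * ∏ i ∈ Finset.range n, derivWithin f (Icc a b) (f^[i] y) := by
  have hdomain : Icc (f z) z ⊆ Icc a b := (Icc_subset_Icc (hmaps hz).1 hz.2).trans hsub
  have hpos : ∀ w ∈ Icc a b, 0 < ∏ i ∈ Finset.range n, derivWithin f (Icc a b) (f^[i] w) :=
    fun w hw => Finset.prod_pos fun i _ => hf.2.2.2 _ (hf.mapsTo.iterate i hw)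
  have hlogle :=
    (log_prod_sub_log_prod_le hlog hf.2.2.2 hf.mapsTo (hdomain hx) (hdomain hy) n).trans
    (mul_le_mul_of_nonneg_left
      (sum_abs_iterate_sub_le ((hf.strictMonoOn (convex_Icc a b)).monotoneOn.mono hsub) hmaps hz
        hx hy n) C.2)
  rw [← Real.log_le_log_iff (hpos x (hdomain hx)) (mul_pos (Real.exp_pos _) (hpos y (hdomain hy))),
    Real.log_mul (Real.exp_pos _).ne' (hpos y (hdomain hy)).ne', Real.log_exp]
  linarith

lemma mapsTo_fundamentalDomain (hg : MonotoneOn g (Icc a b)) (hsub : Icc (f A) A ⊆ Icc a b)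
    (hA : A ∈ Icc a b) (hcomm : ∀ x ∈ Icc a b, g (f x) = f (g x)) (hgA : g A = A) :
    MapsTo g (Icc (f A) A) (Icc (f A) A) := fun x hx => by
  have hfA : f A ≤ A := hx.1.trans hx.2
  have hgfA : g (f A) = f A := by rw [hcomm A hA, hgA]
  exact ⟨hgfA.symm.trans_le (hg (hsub (left_mem_Icc.2 hfA)) (hsub hx) hx.1),
    (hg (hsub hx) hA hx.2).trans_eq hgA⟩

lemma derivWithin_eq_one_of_commute (hf : IsDiffeoOn 1 (Icc a b) f) (hsub : Icc P A ⊆ Icc a b)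
    (hPA : P < A) (hfP : f P = P) (hlt : ∀ x ∈ Ioc P A, f x < x) (hh : IsDiffeoOn 1 (Icc a b) h)
    (hcomm : ∀ x ∈ Icc a b, h (f x) = f (h x)) (hhA : h A = A) :
    derivWithin h (Icc a b) P = 1 := by
  have hPmem : P ∈ Icc P A := left_mem_Icc.2 hPA.le
  have hfmono := (hf.strictMonoOn (convex_Icc a b)).mono hsub
  have horbit : ∀ n, f^[n] A ∈ Ioc P A := iterate_mem_Ioc_of_forall_lt hfmono hfP hlt hPA
  have hlim : Tendsto (fun n => f^[n] A) atTop (𝓝 P) := tendsto_iterate_of_forall_lt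
    (hf.continuousOn.mono hsub) hfmono.monotoneOn hfP hlt (right_mem_Icc.2 hPA.le)
  have hfix : ∀ n, h (f^[n] A) = f^[n] A := fun n =>
    (iterate_apply_comm hf.mapsTo hcomm n A (hsub (right_mem_Icc.2 hPA.le))).trans
      (congrArg _ hhA)
  have hlimI : Tendsto (fun n => f^[n] A) atTop (𝓝[Icc a b] P) := tendsto_nhdsWithin_iff.2
    ⟨hlim, Eventually.of_forall fun n => hsub (Ioc_subset_Icc_self (horbit n))⟩
  have hhP : h P = P := tendsto_nhds_unique
    ((hh.continuousOn P (hsub hPmem)).tendsto.comp hlimI)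
    (by simpa only [comp_def, hfix] using hlim)
  exact (hh.hasDerivWithinAt (hsub hPmem)).eq_one_of_tendsto_fixedPt hhP hlim
    (fun n => ⟨hsub (Ioc_subset_Icc_self (horbit n)), (horbit n).1.ne'⟩) hfix

lemma kopell_exp_le_derivWithin {C : NNReal} (hf : IsDiffeoOn 1 (Icc a b) f)
    (hlog : LipschitzOnWith C (fun x => Real.log (derivWithin f (Icc a b) x)) (Icc a b))
    (hsub : Icc P A ⊆ Icc a b) (hPA : P < A) (hfP : f P = P) (hlt : ∀ x ∈ Ioc P A, f x < x)
    (hh : IsDiffeoOn 1 (Icc a b) h) (hcomm : ∀ x ∈ Icc a b, h (f x) = f (h x)) (hhA : h A = A) :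
    ∀ x ∈ Icc (f A) A, Real.exp (-(C * (A - P))) ≤ derivWithin h (Icc a b) x := by
  obtain ⟨haP, hAb⟩ := (Icc_subset_Icc_iff hPA.le).1 hsub
  have hab : a < b := (haP.trans_lt hPA).trans_le hAb
  have hfmono := (hf.strictMonoOn (convex_Icc a b)).mono hsub
  have hmaps : MapsTo f (Icc P A) (Icc P A) := mapsTo_Icc_of_forall_lt hfmono.monotoneOn hfP hlt
  have hAmem : A ∈ Icc P A := right_mem_Icc.2 hPA.le
  have hdomain : Icc (f A) A ⊆ Icc P A := Icc_subset_Icc (hmaps hAmem).1 le_rfl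
  intro x hx
  have hhx : h x ∈ Icc (f A) A := mapsTo_fundamentalDomain
    (hh.strictMonoOn (convex_Icc a b)).monotoneOn (hdomain.trans hsub) (hsub hAmem) hcomm hhA hx
  -- differentiate `h ∘ fⁿ = fⁿ ∘ h` at `x` and compare `(fⁿ)'` at `x` and `h x` by distortion
  have hratio : ∀ n, derivWithin h (Icc a b) (f^[n] x)
      ≤ Real.exp (C * (A - P)) * derivWithin h (Icc a b) x := by
    intro n
    have hDpos : 0 < ∏ i ∈ Finset.range n, derivWithin f (Icc a b) (f^[i] x) :=
      Finset.prod_pos fun i _ => hf.2.2.2 _ (hf.mapsTo.iterate i (hsub (hdomain hx)))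
    refine le_of_mul_le_mul_right ?_ hDpos
    calc _ = (∏ i ∈ Finset.range n, derivWithin f (Icc a b) (f^[i] (h x)))
          * derivWithin h (Icc a b) x :=
          mul_prod_deriv_iterate_eq_of_commute (uniqueDiffOn_Icc hab) (fun _ => hf.hasDerivWithinAt)
            hf.mapsTo (fun _ => hh.hasDerivWithinAt) hh.mapsTo hcomm n (hsub (hdomain hx))
      _ ≤ (Real.exp (C * (A - P)) * ∏ i ∈ Finset.range n, derivWithin f (Icc a b) (f^[i] x))
          * derivWithin h (Icc a b) x :=
          mul_le_mul_of_nonneg_right (prod_derivWithin_iterate_le hf hlog hsub hmaps hAmem hhx hx n)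
            (hh.2.2.2 x (hsub (hdomain hx))).le
      _ = _ := by ring
  have hlim : Tendsto (fun n => derivWithin h (Icc a b) (f^[n] x)) atTop (𝓝 1) := by
    rw [← derivWithin_eq_one_of_commute hf hsub hPA hfP hlt hh hcomm hhA]
    refine ((hh.2.2.1.continuousOn_derivWithin (uniqueDiffOn_Icc hab) le_rfl) P
      (hsub (left_mem_Icc.2 hPA.le))).tendsto.comp (tendsto_nhdsWithin_iff.2 ⟨?_, ?_⟩)
    · exact tendsto_iterate_of_forall_lt (hf.continuousOn.mono hsub) hfmono.monotoneOn hfP hlt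
        (hdomain hx)
    · exact Eventually.of_forall fun n => hsub (hmaps.iterate n (hdomain hx))
  rw [Real.exp_neg, inv_le_iff_one_le_mul₀' (Real.exp_pos _)]
  exact le_of_tendsto' hlim hratio

lemma kopell_eqOn_fundamentalDomain (hf : IsDiffeoOn 2 (Icc a b) f) (hsub : Icc P A ⊆ Icc a b)
    (hPA : P < A) (hfP : f P = P) (hlt : ∀ x ∈ Ioc P A, f x < x) (hg : IsDiffeoOn 1 (Icc a b) g)
    (hcomm : ∀ x ∈ Icc a b, g (f x) = f (g x)) (hgA : g A = A) :
    ∀ x ∈ Icc (f A) A, g x = x := by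
  obtain ⟨haP, hAb⟩ := (Icc_subset_Icc_iff hPA.le).1 hsub
  have hab : a < b := (haP.trans_lt hPA).trans_le hAb
  have hf1 : IsDiffeoOn 1 (Icc a b) f := hf.of_le (by norm_num)
  obtain ⟨C, hlog⟩ := hf.exists_lipschitzOnWith_log_derivWithin hab
  have hAmem : A ∈ Icc P A := right_mem_Icc.2 hPA.le
  have hmaps : MapsTo f (Icc P A) (Icc P A) :=
    mapsTo_Icc_of_forall_lt ((hf1.strictMonoOn (convex_Icc a b)).mono hsub).monotoneOn hfP hlt
  have hdomain : Icc (f A) A ⊆ Icc a b := (Icc_subset_Icc (hmaps hAmem).1 le_rfl).trans hsub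
  have hbound : ∀ k, ∀ x ∈ Icc (f A) A, Real.exp (-(C * (A - P))) ≤ derivWithin g^[k] (Icc a b) x :=
    fun k => kopell_exp_le_derivWithin hf1 hlog hsub hPA hfP hlt
      (hg.iterate (uniqueDiffOn_Icc hab) k)
      (fun x hx => (iterate_apply_comm hg.mapsTo (fun y hy => (hcomm y hy).symm) k x hx).symm)
      (iterate_fixed hgA k)
  have hgmono := (hg.strictMonoOn (convex_Icc a b)).monotoneOn
  have hJ : MapsTo g (Icc (f A) A) (Icc (f A) A) :=
    mapsTo_fundamentalDomain hgmono hdomain (hsub hAmem) hcomm hgA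
  by_contra! hne
  obtain ⟨x₀, hx₀, hgx₀⟩ := hne
  obtain ⟨L, -, hL⟩ := exists_tendsto_iterate (hgmono.mono hdomain) hJ hx₀
  have hstep : Tendsto (fun k => |g^[k] (g x₀) - g^[k] x₀|) atTop (𝓝 0) := by
    have hdiff := ((hL.comp (tendsto_add_atTop_nat 1)).sub hL).abs
    rw [sub_self, abs_zero] at hdiff
    exact hdiff.congr fun k => rfl
  have hlow : ∀ k, Real.exp (-(C * (A - P))) * |g x₀ - x₀| ≤ |g^[k] (g x₀) - g^[k] x₀| :=
    fun k => mul_abs_sub_le_abs_sub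
      (fun _ => (hg.iterate (uniqueDiffOn_Icc hab) k).hasDerivWithinAt)
      hdomain (hbound k) hx₀ (hJ hx₀)
  exact (ge_of_tendsto' hstep hlow).not_gt
    (mul_pos (Real.exp_pos _) (abs_pos.2 (sub_ne_zero.2 hgx₀)))

lemma kopell_eqOn_Ioc (hf : IsDiffeoOn 2 (Icc a b) f) (hsub : Icc P A ⊆ Icc a b) (hPA : P < A)
    (hfP : f P = P) (hlt : ∀ x ∈ Ioc P A, f x < x) (hg : IsDiffeoOn 1 (Icc a b) g)
    (hcomm : ∀ x ∈ Icc a b, g (f x) = f (g x)) (hgA : g A = A) : ∀ x ∈ Ioc P A, g x = x := by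
  intro x hx
  have hfmono := (hf.strictMonoOn (convex_Icc a b)).mono hsub
  have hlim := tendsto_iterate_of_forall_lt (hf.continuousOn.mono hsub) hfmono.monotoneOn hfP hlt
    (right_mem_Icc.2 hPA.le)
  obtain ⟨m, hm, hxm⟩ := exists_lt_le_of_exists_lt (u := fun n => f^[n] A) hx.2
    (hlim.eventually (eventually_lt_nhds hx.1)).exists
  have hAm := iterate_mem_Ioc_of_forall_lt hfmono hfP hlt hPA m
  rw [iterate_succ_apply'] at hm
  exact kopell_eqOn_fundamentalDomain hf ((Icc_subset_Icc_right hAm.2).trans hsub) hAm.1 hfP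
    (fun y hy => hlt y ⟨hy.1, hy.2.trans hAm.2⟩) hg hcomm
    ((iterate_apply_comm hf.mapsTo hcomm m A (hsub (right_mem_Icc.2 hPA.le))).trans
      (congrArg _ hgA)) x ⟨hm.le, hxm⟩

theorem kopell (hf : IsDiffeoOn 2 (Icc a b) f) (hsub : Icc P Q ⊆ Icc a b) (hfP : f P = P)
    (hlt : ∀ x ∈ Ioo P Q, f x < x) (hg : IsDiffeoOn 1 (Icc a b) g)
    (hcomm : ∀ x ∈ Icc a b, g (f x) = f (g x)) {z : ℝ} (hz : z ∈ Ioo P Q) (hgz : g z = z) :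
    ∀ x ∈ Ioo P Q, g x = x := by
  have hsub' : ∀ {y}, y ∈ Ioo P Q → Icc P y ⊆ Icc a b := fun hy =>
    (Icc_subset_Icc_right hy.2.le).trans hsub
  have hlt' : ∀ {y}, y ∈ Ioo P Q → ∀ x ∈ Ioc P y, f x < x := fun hy x hx =>
    hlt x ⟨hx.1, hx.2.trans_lt hy.2⟩
  have hcore := kopell_eqOn_Ioc hf (hsub' hz) hz.1 hfP (hlt' hz) hg hcomm hgz
  intro x hx
  rcases le_or_gt x z with hxz | hzx
  · exact hcore x ⟨hx.1, hxz⟩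
  have hfmono := (hf.strictMonoOn (convex_Icc a b)).mono (hsub' hx)
  obtain ⟨n, hn⟩ := ((tendsto_iterate_of_forall_lt (hf.continuousOn.mono (hsub' hx))
    hfmono.monotoneOn hfP (hlt' hx) (right_mem_Icc.2 hx.1.le)).eventually
    (eventually_lt_nhds hz.1)).exists
  have hfn : f^[n] x ∈ Ioc P x := iterate_mem_Ioc_of_forall_lt hfmono hfP (hlt' hx) hx.1 n
  have hxI : x ∈ Icc a b := hsub' hx (right_mem_Icc.2 hx.1.le)
  refine (hf.1.iterate hf.mapsTo n) (hg.mapsTo hxI) hxI ?_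
  rw [← iterate_apply_comm hf.mapsTo hcomm n x hxI]
  exact hcore _ ⟨hfn.1, hn.le⟩

end Kopell

structure IsC2Action {G : Type*} [Group G] (ρ : G → ℝ → ℝ) : Prop where
  map_mul : ∀ g h : G, ∀ x ∈ Icc (0 : ℝ) 1, ρ (g * h) x = ρ g (ρ h x)
  map_one : ∀ x ∈ Icc (0 : ℝ) 1, ρ 1 x = x
  isDiffeoOn : ∀ g : G, IsDiffeoOn 2 (Icc (0 : ℝ) 1) (ρ g)

namespace IsC2Action

variable {G : Type*} [Group G] {ρ : G → ℝ → ℝ} {p q : ℝ}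

lemma mapsTo (hρ : IsC2Action ρ) (g : G) : MapsTo (ρ g) (Icc 0 1) (Icc 0 1) :=
  (hρ.isDiffeoOn g).mapsTo

lemma strictMonoOn (hρ : IsC2Action ρ) (g : G) : StrictMonoOn (ρ g) (Icc 0 1) :=
  (hρ.isDiffeoOn g).strictMonoOn (convex_Icc 0 1)

lemma inv_apply_apply (hρ : IsC2Action ρ) (g : G) {x : ℝ} (hx : x ∈ Icc (0 : ℝ) 1) :
    ρ g⁻¹ (ρ g x) = x := by
  rw [← hρ.map_mul _ _ x hx, inv_mul_cancel, hρ.map_one x hx]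

lemma apply_inv_apply (hρ : IsC2Action ρ) (g : G) {x : ℝ} (hx : x ∈ Icc (0 : ℝ) 1) :
    ρ g (ρ g⁻¹ x) = x := by
  rw [← hρ.map_mul _ _ x hx, mul_inv_cancel, hρ.map_one x hx]

lemma inv_apply_eq (hρ : IsC2Action ρ) {g : G} {x : ℝ} (hx : x ∈ Icc (0 : ℝ) 1)
    (hgx : ρ g x = x) : ρ g⁻¹ x = x := by
  conv_lhs => rw [← hgx]
  exact hρ.inv_apply_apply g hx

lemma apply_comm (hρ : IsC2Action ρ) {g h : G} (hgh : Commute g h) {x : ℝ}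
    (hx : x ∈ Icc (0 : ℝ) 1) : ρ g (ρ h x) = ρ h (ρ g x) := by
  rw [← hρ.map_mul _ _ x hx, hgh.eq, hρ.map_mul _ _ x hx]

lemma apply_pow (hρ : IsC2Action ρ) (g : G) (n : ℕ) {x : ℝ} (hx : x ∈ Icc (0 : ℝ) 1) :
    ρ (g ^ n) x = (ρ g)^[n] x := by
  induction n generalizing x with
  | zero => simpa using hρ.map_one x hx
  | succ n ih => rw [pow_succ, hρ.map_mul _ _ x hx, iterate_succ_apply, ih (hρ.mapsTo g hx)]

lemma apply_mem_Ioo (hρ : IsC2Action ρ) (hsub : Icc p q ⊆ Icc 0 1) {g : G} (hp : ρ g p = p)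
    (hq : ρ g q = q) {y : ℝ} (hy : y ∈ Ioo p q) : ρ g y ∈ Ioo p q := by
  have hpq : p ≤ q := (hy.1.trans hy.2).le
  have hyI := hsub (Ioo_subset_Icc_self hy)
  exact ⟨hp.symm.trans_lt (hρ.strictMonoOn g (hsub (left_mem_Icc.2 hpq)) hyI hy.1),
    (hρ.strictMonoOn g hyI (hsub (right_mem_Icc.2 hpq)) hy.2).trans_eq hq⟩

lemma eqOn_Ioo_of_commute (hρ : IsC2Action ρ) {f g : G} (hfg : Commute f g)
    (hsub : Icc p q ⊆ Icc 0 1) (hfp : ρ f p = p) (hfq : ρ f q = q)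
    (hne : ∀ y ∈ Ioo p q, ρ f y ≠ y) {z : ℝ} (hz : z ∈ Ioo p q) (hgz : ρ g z = z) :
    ∀ y ∈ Ioo p q, ρ g y = y := by
  have hg := (hρ.isDiffeoOn g).of_le (by norm_num : (1 : WithTop ℕ∞) ≤ 2)
  have hpq : p ≤ q := (hz.1.trans hz.2).le
  rcases forall_lt_or_forall_gt_of_forall_ne
    ((hρ.isDiffeoOn f).continuousOn.mono (Ioo_subset_Icc_self.trans hsub)) hne with hlt | hgt
  · exact kopell (hρ.isDiffeoOn f) hsub hfp hlt hg (fun x hx => hρ.apply_comm hfg.symm hx) hz hgz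
  · have hfp' := hρ.inv_apply_eq (hsub (left_mem_Icc.2 hpq)) hfp
    have hfq' := hρ.inv_apply_eq (hsub (right_mem_Icc.2 hpq)) hfq
    refine kopell (hρ.isDiffeoOn f⁻¹) hsub hfp' (fun y hy => ?_) hg
      (fun x hx => hρ.apply_comm hfg.inv_left.symm hx) hz hgz
    simpa only [hρ.apply_inv_apply f (hsub (Ioo_subset_Icc_self hy))] using
      hgt _ (hρ.apply_mem_Ioo hsub hfp' hfq' hy)

lemma exists_Ioo_eqOn_of_commute (hρ : IsC2Action ρ) {w c : G} (hwc : Commute w c) {y : ℝ}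
    (hy : y ∈ Icc (0 : ℝ) 1) (hcy : ρ c y = y) (hwy : ρ w y ≠ y) :
    ∃ r s, r < y ∧ y < s ∧ ∀ x ∈ Ioo r s, ρ c x = x := by
  have hw := hρ.isDiffeoOn w
  obtain ⟨r, s, h0r, hry, hys, hs1, hwr, hws, hne⟩ := exists_Ioo_fixedPt_free hw.continuousOn
    (hw.apply_left zero_le_one) (hw.apply_right zero_le_one) hy hwy
  exact ⟨r, s, hry, hys,
    hρ.eqOn_Ioo_of_commute hwc (Icc_subset_Icc h0r hs1) hwr hws hne ⟨hry, hys⟩ hcy⟩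

lemma apply_eq_of_mem_center (hρ : IsC2Action ρ) {c : G} (hc : c ∈ Subgroup.center G) {y : ℝ}
    (hy : y ∈ Icc (0 : ℝ) 1) (hcy : ρ c y = y)
    (hmove : ∀ r s, r < y → y < s → ∃ x ∈ Ioo r s, ρ c x ≠ x) (g : G) : ρ g y = y := by
  by_contra hgy
  obtain ⟨r, s, hry, hys, hid⟩ :=
    hρ.exists_Ioo_eqOn_of_commute (Subgroup.mem_center_iff.1 hc g) hy hcy hgy
  obtain ⟨x, hx, hcx⟩ := hmove r s hry hys
  exact hcx (hid x hx)

lemma apply_le_apply_of_mem_center (hρ : IsC2Action ρ) {c : G} (hc : c ∈ Subgroup.center G)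
    (hsub : Icc p q ⊆ Icc 0 1) (hcp : ρ c p = p) (hcq : ρ c q = q)
    (hne : ∀ y ∈ Ioo p q, ρ c y ≠ y) {g h : G} {y : ℝ} (hy : y ∈ Ioo p q)
    (hgh : ρ g y ≤ ρ h y) : ∀ z ∈ Ioo p q, ρ g z ≤ ρ h z := by
  have hI : ∀ {z}, z ∈ Ioo p q → z ∈ Icc (0 : ℝ) 1 := fun hz => hsub (Ioo_subset_Icc_self hz)
  have hky : ρ (h⁻¹ * g) y ≤ y := by
    rw [hρ.map_mul _ _ y (hI hy)]
    exact ((hρ.strictMonoOn h⁻¹).monotoneOn (hρ.mapsTo g (hI hy)) (hρ.mapsTo h (hI hy))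
      hgh).trans_eq (hρ.inv_apply_apply h (hI hy))
  have hk : ∀ z ∈ Ioo p q, ρ (h⁻¹ * g) z ≤ z := by
    by_cases hfix : ∃ z ∈ Ioo p q, ρ (h⁻¹ * g) z = z
    · obtain ⟨z, hz, hkz⟩ := hfix
      exact fun w hw => (hρ.eqOn_Ioo_of_commute (Subgroup.mem_center_iff.1 hc _).symm hsub hcp hcq
        hne hz hkz w hw).le
    · rcases forall_lt_or_forall_gt_of_forall_ne ((hρ.isDiffeoOn _).continuousOn.mono
        (Ioo_subset_Icc_self.trans hsub)) (fun z hz hkz => hfix ⟨z, hz, hkz⟩) with hlt | hgt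
      · exact fun z hz => (hlt z hz).le
      · exact absurd hky (hgt y hy).not_ge
  intro z hz
  have hmono := (hρ.strictMonoOn h).monotoneOn (hρ.mapsTo _ (hI hz)) (hI hz) (hk z hz)
  rwa [hρ.map_mul _ _ z (hI hz), hρ.apply_inv_apply h (hρ.mapsTo g (hI hz))] at hmono

lemma exists_zpow_neg_apply_lt (hρ : IsC2Action ρ) {c : G} (hsub : Icc p q ⊆ Icc 0 1)
    (hp : ∀ g : G, ρ g p = p) (hq : ∀ g : G, ρ g q = q) (hc : ∀ y ∈ Ioo p q, y < ρ c y)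
    {y t : ℝ} (hy : y ∈ Ioo p q) (ht : p < t) : ∃ n : ℕ, ρ (c ^ (-(n : ℤ))) y < t := by
  have hsub' : Icc p y ⊆ Icc 0 1 := (Icc_subset_Icc_right hy.2.le).trans hsub
  have hlt : ∀ x ∈ Ioc p y, ρ c⁻¹ x < x := fun x hx => by
    have hx' : x ∈ Ioo p q := ⟨hx.1, hx.2.trans_lt hy.2⟩
    simpa only [hρ.apply_inv_apply c (hsub (Ioo_subset_Icc_self hx'))] using
      hc _ (hρ.apply_mem_Ioo hsub (hp c⁻¹) (hq c⁻¹) hx')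
  have hlim := tendsto_iterate_of_forall_lt ((hρ.isDiffeoOn c⁻¹).continuousOn.mono hsub')
    ((hρ.strictMonoOn c⁻¹).monotoneOn.mono hsub') (hp c⁻¹) hlt (right_mem_Icc.2 hy.1.le)
  obtain ⟨n, hn⟩ := (hlim.eventually (eventually_lt_nhds ht)).exists
  refine ⟨n, ?_⟩
  rwa [zpow_neg, zpow_natCast, ← inv_pow, hρ.apply_pow _ n (hsub' (right_mem_Icc.2 hy.1.le))]

lemma exists_zpow_apply_le_lt (hρ : IsC2Action ρ) {c : G} (hsub : Icc p q ⊆ Icc 0 1)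
    (hp : ∀ g : G, ρ g p = p) (hq : ∀ g : G, ρ g q = q) (hc : ∀ y ∈ Ioo p q, y < ρ c y)
    {x₀ y : ℝ} (hx₀ : x₀ ∈ Ioo p q) (hy : y ∈ Ioo p q) :
    ∃ k : ℤ, ρ (c ^ k) x₀ ≤ y ∧ y < ρ (c ^ (k + 1)) x₀ := by
  have hI : x₀ ∈ Icc (0 : ℝ) 1 := hsub (Ioo_subset_Icc_self hx₀)
  refine exists_le_lt_add_one_of_monotone (monotone_int_of_le_succ fun k => ?_) ?_ ?_
  · rw [add_comm k 1, zpow_one_add, hρ.map_mul _ _ x₀ hI]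
    exact (hc _ (hρ.apply_mem_Ioo hsub (hp _) (hq _) hx₀)).le
  · obtain ⟨n, hn⟩ := hρ.exists_zpow_neg_apply_lt hsub hp hq hc hx₀ hy.1
    exact ⟨_, hn.le⟩
  · obtain ⟨n, hn⟩ := hρ.exists_zpow_neg_apply_lt hsub hp hq hc hy hx₀.1
    refine ⟨n, ?_⟩
    have hyI : y ∈ Icc (0 : ℝ) 1 := hsub (Ioo_subset_Icc_self hy)
    have hmono := hρ.strictMonoOn (c ^ (n : ℤ)) (hρ.mapsTo _ hyI) hI hn
    rwa [← hρ.map_mul _ _ y hyI, ← zpow_add, add_neg_cancel, zpow_zero, hρ.map_one y hyI] at hmono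

lemma false_of_commutatorElement_eq (hρ : IsC2Action ρ) {a b c : G}
    (hc : c ∈ Subgroup.center G) (habc : ⁅a, b⁆ = c) (hsub : Icc p q ⊆ Icc 0 1)
    (hp : ∀ g : G, ρ g p = p) (hq : ∀ g : G, ρ g q = q) (hc_lt : ∀ y ∈ Ioo p q, y < ρ c y)
    {x₀ : ℝ} (hx₀ : x₀ ∈ Ioo p q) : False := by
  have hI : ∀ {y}, y ∈ Ioo p q → y ∈ Icc (0 : ℝ) 1 := fun hy => hsub (Ioo_subset_Icc_self hy)
  obtain ⟨k, hk, hk1⟩ := hρ.exists_zpow_apply_le_lt hsub hp hq hc_lt hx₀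
    (hρ.apply_mem_Ioo hsub (hp b) (hq b) hx₀)
  have hy : ρ a⁻¹ x₀ ∈ Ioo p q := hρ.apply_mem_Ioo hsub (hp _) (hq _) hx₀
  have hconj : c * b = a * b * a⁻¹ := by rw [← habc, commutatorElement_def]; group
  have key : ρ a (ρ (c ^ (k + 1)) (ρ a⁻¹ x₀)) ≤ ρ a (ρ b (ρ a⁻¹ x₀)) :=
    calc ρ a (ρ (c ^ (k + 1)) (ρ a⁻¹ x₀))
        = ρ c (ρ (c ^ k) x₀) := by
          rw [hρ.apply_comm (Subgroup.mem_center_iff.1 (Subgroup.zpow_mem _ hc (k + 1)) a)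
            (hI hy), hρ.apply_inv_apply a (hI hx₀), add_comm k 1, zpow_one_add,
            hρ.map_mul _ _ x₀ (hI hx₀)]
      _ ≤ ρ c (ρ b x₀) := (hρ.strictMonoOn c).monotoneOn (hρ.mapsTo _ (hI hx₀))
          (hρ.mapsTo _ (hI hx₀)) hk
      _ = ρ a (ρ b (ρ a⁻¹ x₀)) := by
          rw [← hρ.map_mul _ _ x₀ (hI hx₀), hconj, hρ.map_mul _ _ x₀ (hI hx₀),
            hρ.map_mul _ _ _ (hI hy)]
  have hle := ((hρ.strictMonoOn a).le_iff_le (hρ.mapsTo _ (hI hy)) (hρ.mapsTo _ (hI hy))).1 key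
  exact (hρ.apply_le_apply_of_mem_center hc hsub (hp c) (hq c) (fun y hy => (hc_lt y hy).ne') hy
    hle x₀ hx₀).not_gt hk1

theorem apply_eq_of_mem_center_of_commutatorElement_eq (hρ : IsC2Action ρ) {a b c : G}
    (hc : c ∈ Subgroup.center G) (habc : ⁅a, b⁆ = c) : ∀ x ∈ Icc (0 : ℝ) 1, ρ c x = x := by
  by_contra! h
  obtain ⟨x₀, hx₀, hcx₀⟩ := h
  have hcd := hρ.isDiffeoOn c
  obtain ⟨p, q, h0p, hpx, hxq, hq1, hcp, hcq, hne⟩ := exists_Ioo_fixedPt_free hcd.continuousOn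
    (hcd.apply_left zero_le_one) (hcd.apply_right zero_le_one) hx₀ hcx₀
  have hsub : Icc p q ⊆ Icc 0 1 := Icc_subset_Icc h0p hq1
  have hp : ∀ g : G, ρ g p = p := hρ.apply_eq_of_mem_center hc
    (hsub (left_mem_Icc.2 (hpx.trans hxq).le)) hcp fun r s hr hs => by
      have hm : p < min s x₀ := lt_min hs hpx
      refine ⟨(p + min s x₀) / 2, ⟨?_, ?_⟩, hne _ ⟨?_, ?_⟩⟩ <;>
        linarith [min_le_left s x₀, min_le_right s x₀]
  have hq : ∀ g : G, ρ g q = q := hρ.apply_eq_of_mem_center hc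
    (hsub (right_mem_Icc.2 (hpx.trans hxq).le)) hcq fun r s hr hs => by
      have hm : max r x₀ < q := max_lt hr hxq
      refine ⟨(max r x₀ + q) / 2, ⟨?_, ?_⟩, hne _ ⟨?_, ?_⟩⟩ <;>
        linarith [le_max_left r x₀, le_max_right r x₀]
  rcases forall_lt_or_forall_gt_of_forall_ne
    (hcd.continuousOn.mono (Ioo_subset_Icc_self.trans hsub)) hne with hlt | hgt
  · refine hρ.false_of_commutatorElement_eq (Subgroup.inv_mem _ hc)
      (by rw [← habc, commutatorElement_inv]) hsub hp hq (fun y hy => ?_) ⟨hpx, hxq⟩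
    simpa only [hρ.apply_inv_apply c (hsub (Ioo_subset_Icc_self hy))] using
      hlt _ (hρ.apply_mem_Ioo hsub (hp c⁻¹) (hq c⁻¹) hy)
  · exact hρ.false_of_commutatorElement_eq hc habc hsub hp hq hgt ⟨hpx, hxq⟩

end IsC2Action

theorem Group.commute_of_commutatorElement_mem_center_eq_one {G : Type*} [Group G]
    [Group.IsNilpotent G] (h : ∀ a b : G, ⁅a, b⁆ ∈ Subgroup.center G → ⁅a, b⁆ = 1) (a b : G) :
    Commute a b := by
  have hstep : ∀ n, (⊤ : Subgroup G).lowerCentralSeries (n + 2) = ⊥ →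
      (⊤ : Subgroup G).lowerCentralSeries (n + 1) = ⊥ := by
    intro n hn
    rw [Subgroup.lowerCentralSeries_succ, eq_bot_iff, Subgroup.commutator_le]
    refine fun x hx g _ => Subgroup.mem_bot.2 (h x g (Subgroup.mem_center_iff.2 fun k => ?_))
    have hmem : ⁅⁅x, g⁆, k⁆ ∈ (⊤ : Subgroup G).lowerCentralSeries (n + 2) :=
      Subgroup.commutator_mem_commutator
        (Subgroup.commutator_mem_commutator hx (Subgroup.mem_top g)) (Subgroup.mem_top k)
    rw [hn, Subgroup.mem_bot, commutatorElement_eq_one_iff_commute] at hmem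
    exact hmem.eq.symm
  have hone : ∀ n, (⊤ : Subgroup G).lowerCentralSeries (n + 1) = ⊥ →
      (⊤ : Subgroup G).lowerCentralSeries 1 = ⊥ := by
    intro n
    induction n with
    | zero => exact id
    | succ n ih => exact fun hn => ih (hstep n hn)
  obtain ⟨n, hn⟩ := Subgroup.nilpotent_iff_lowerCentralSeries.1 ‹_›
  have h1 := hone n (eq_bot_iff.2 ((Subgroup.lowerCentralSeries_antitone ⊤ n.le_succ).trans hn.le))
  rw [← commutatorElement_eq_one_iff_commute, ← Subgroup.mem_bot, ← h1]
  exact Subgroup.commutator_mem_commutator (Subgroup.mem_top a) (Subgroup.mem_top b)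

/-- Any nilpotent group of orientation-preserving `C²` diffeomorphisms of the
closed interval `[0,1]` is abelian.  The group of diffeomorphisms is encoded
as an abstract nilpotent group `G` together with a faithful action `ρ` of `G`
on `[0,1]` by orientation-preserving `C²` diffeomorphisms. -/
theorem abelian_of_nilpotent_C2_diffeos_Icc
    {G : Type*} [Group G] [Group.IsNilpotent G] (ρ : G → ℝ → ℝ)
    (hmul : ∀ g h : G, ∀ x ∈ Icc (0:ℝ) 1, ρ (g * h) x = ρ g (ρ h x))
    (hone : ∀ x ∈ Icc (0:ℝ) 1, ρ 1 x = x)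
    (hdiff : ∀ g : G, IsDiffeoOn 2 (Icc (0:ℝ) 1) (ρ g))
    (hfaithful : ∀ g : G, (∀ x ∈ Icc (0:ℝ) 1, ρ g x = x) → g = 1) :
    ∀ a b : G, a * b = b * a := by
  have hρ : IsC2Action ρ := ⟨hmul, hone, hdiff⟩
  intro a b
  refine (Group.commute_of_commutatorElement_mem_center_eq_one (fun x y hc => ?_) a b).eq
  exact hfaithful _ (hρ.apply_eq_of_mem_center_of_commutatorElement_eq hc rfl)
end

section
/- For every positive integer n, the group of orientation-preserving C^∞ diffeomorphisms of the real line ℝ contains a nilpotent subgroup whose nilpotency class is exactly n. -/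
/-
The group is a subgroup of the unrestricted wreath product `ℤ ≀ ℤ`, whose elements are pairs
`(s, a)` with `s : ℤ` and `a : ℤ → ℤ`. Fix a smooth diffeomorphism `φ` of `ℝ` supported in
`(1/4, 3/4)` that moves `1/2`. Then `(s, a)` acts on `ℝ` by `φ ^ a k`, transported to each block
`[k, k + 1)`, followed by the translation by `s`. This map is smooth because it is the identity
near the integers, and the action is faithful because no nonzero power of `φ` fixes `1/2`.

The elements whose second coordinate is a polynomial of degree `≤ n` form a subgroup. The second
coordinate of a commutator is a sum of differences of translates of those of its entries, so
every commutator lowers the degree by one and `γ_{n+2} = 1`. Conversely, commuting `(0, k ↦ k ^ n)`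
`n` times with the unit translation produces its `n`-th difference, the constant `n!`, so
`γ_{n+1} ≠ 1`.
-/

open scoped ContDiff

/-- `f` is an orientation-preserving `C^n` diffeomorphism of `ℝ`: a `C^n`
bijection of `ℝ` with everywhere positive derivative (its inverse is then
automatically `C^n`). -/
def IsDiffeoR (n : WithTop ℕ∞) (f : ℝ → ℝ) : Prop :=
  Function.Bijective f ∧ ContDiff ℝ n f ∧ ∀ x : ℝ, 0 < deriv f x

open Set Filter Topology Function fwdDiff fwdDiff_aux
open scoped commutatorElement

theorem Subgroup.top_lowerCentralSeries_eq_bot_iff {G : Type*} [Group G] (S : Subgroup G)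
    (n : ℕ) : (⊤ : Subgroup S).lowerCentralSeries n = ⊥ ↔ S.lowerCentralSeries n = ⊥ := by
  rw [← top_subtype_lowerCentralSeries S n, map_eq_bot_iff_of_injective _ S.subtype_injective]

theorem fwdDiff_iter_sub {M G : Type*} [AddCommMonoid M] [AddCommGroup G] (h : M) (f g : M → G)
    (n : ℕ) : Δ_[h] ^[n] (f - g) = Δ_[h] ^[n] f - Δ_[h] ^[n] g := by
  simpa only [coe_fwdDiffₗ_pow] using map_sub (fwdDiffₗ M G h ^ n) f g

def polyDegLT (d : ℕ) : AddSubgroup (ℤ → ℤ) :=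
  (LinearMap.ker (fwdDiffₗ ℤ ℤ 1 ^ d)).toAddSubgroup

theorem mem_polyDegLT {d : ℕ} {f : ℤ → ℤ} : f ∈ polyDegLT d ↔ Δ_[1] ^[d] f = 0 := by
  rw [polyDegLT, Submodule.mem_toAddSubgroup, LinearMap.mem_ker, ← coe_fwdDiffₗ_pow]

theorem comp_add_mem_polyDegLT {d : ℕ} {f : ℤ → ℤ} (hf : f ∈ polyDegLT d) (b : ℤ) :
    (fun k => f (k + b)) ∈ polyDegLT d := by
  rw [mem_polyDegLT] at hf ⊢
  funext k
  rw [fwdDiff_iter_comp_add, hf]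
  rfl

theorem comp_sub_sub_comp_sub_mem_polyDegLT {d : ℕ} {f : ℤ → ℤ} (hf : f ∈ polyDegLT d)
    (b c : ℤ) : (fun k => f (k - b) - f (k - c)) ∈ polyDegLT (d - 1) := by
  obtain _ | d := d
  · rw [mem_polyDegLT, iterate_zero, id] at hf
    subst hf
    exact zero_mem _
  rw [mem_polyDegLT, iterate_succ_apply'] at hf
  have hper : Periodic (Δ_[1] ^[d] f) 1 := fun k => sub_eq_zero.1 (congrFun hf k)
  rw [Nat.add_sub_cancel, mem_polyDegLT]
  have hshift (m k : ℤ) : Δ_[1] ^[d] (fun k => f (k - m)) k = Δ_[1] ^[d] f k := by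
    simpa [sub_eq_add_neg, fwdDiff_iter_comp_add] using hper.sub_int_mul_eq m
  funext k
  exact (congrFun (fwdDiff_iter_sub 1 (fun k => f (k - b)) (fun k => f (k - c)) d) k).trans
    (by simp [hshift])

@[ext]
structure IntWreath where
  shift : ℤ
  twist : ℤ → ℤ

namespace IntWreath

instance : One IntWreath := ⟨⟨0, 0⟩⟩
instance : Mul IntWreath :=
  ⟨fun g h => ⟨g.shift + h.shift, fun k => g.twist (k + h.shift) + h.twist k⟩⟩
instance : Inv IntWreath := ⟨fun g => ⟨-g.shift, fun k => -g.twist (k - g.shift)⟩⟩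

@[simp] theorem one_shift : (1 : IntWreath).shift = 0 := rfl
@[simp] theorem one_twist : (1 : IntWreath).twist = 0 := rfl
@[simp] theorem mul_shift (g h : IntWreath) : (g * h).shift = g.shift + h.shift := rfl
@[simp] theorem mul_twist (g h : IntWreath) :
    (g * h).twist = fun k => g.twist (k + h.shift) + h.twist k := rfl
@[simp] theorem inv_shift (g : IntWreath) : g⁻¹.shift = -g.shift := rfl
@[simp] theorem inv_twist (g : IntWreath) : g⁻¹.twist = fun k => -g.twist (k - g.shift) := rfl

instance : Group IntWreath :=
  Group.ofLeftAxioms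
    (fun g h l => IntWreath.ext (add_assoc _ _ _)
      (funext fun k => by simp [add_assoc, add_comm l.shift]))
    (fun g => IntWreath.ext (zero_add _) (funext fun k => by simp))
    (fun g => IntWreath.ext (neg_add_cancel _) (funext fun k => by simp))

theorem commutator_shift (g h : IntWreath) : ⁅g, h⁆.shift = 0 := by
  simp [commutatorElement_def]

theorem commutator_twist (g h : IntWreath) : ⁅g, h⁆.twist =
    (fun k => g.twist (k - g.shift) - g.twist (k - (g.shift + h.shift))) +
      (fun k => h.twist (k - (h.shift + g.shift)) - h.twist (k - h.shift)) := by
  funext k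
  simp [commutatorElement_def]
  ring_nf

def base : Subgroup IntWreath where
  carrier := {g | g.shift = 0}
  one_mem' := rfl
  mul_mem' {g h} (hg : g.shift = 0) (hh : h.shift = 0) := by simp [hg, hh]
  inv_mem' {g} (hg : g.shift = 0) := by simp [hg]

def polyTwist (d : ℕ) : Subgroup IntWreath where
  carrier := {g | g.twist ∈ polyDegLT d}
  one_mem' := show (0 : ℤ → ℤ) ∈ polyDegLT d from zero_mem _
  mul_mem' {_ h} hg hh := add_mem (comp_add_mem_polyDegLT hg h.shift) hh
  inv_mem' {g} hg := neg_mem (comp_add_mem_polyDegLT hg (-g.shift))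

theorem mem_base {g : IntWreath} : g ∈ base ↔ g.shift = 0 := Iff.rfl

theorem mem_polyTwist {d : ℕ} {g : IntWreath} : g ∈ polyTwist d ↔ g.twist ∈ polyDegLT d :=
  Iff.rfl

theorem commutator_mem_base_inf_polyTwist {d : ℕ} {g h : IntWreath} (hg : g ∈ polyTwist d)
    (hh : h ∈ polyTwist d) : ⁅g, h⁆ ∈ base ⊓ polyTwist (d - 1) :=
  Subgroup.mem_inf.2 ⟨commutator_shift g h, by
    rw [mem_polyTwist, commutator_twist]
    exact add_mem (comp_sub_sub_comp_sub_mem_polyDegLT hg _ _)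
      (comp_sub_sub_comp_sub_mem_polyDegLT hh _ _)⟩

theorem commutator_mem_base_inf_polyTwist_of_mem {d : ℕ} {g : IntWreath}
    (hg : g ∈ base ⊓ polyTwist d) (h : IntWreath) :
    ⁅g, h⁆ ∈ base ⊓ polyTwist (d - 1) := by
  obtain ⟨hg₀, hgd⟩ := Subgroup.mem_inf.1 hg
  refine Subgroup.mem_inf.2 ⟨commutator_shift g h, ?_⟩
  have htwist : ⁅g, h⁆.twist = fun k => g.twist (k - 0) - g.twist (k - (0 + h.shift)) := by
    rw [commutator_twist, mem_base.1 hg₀]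
    funext k
    simp
  rw [mem_polyTwist, htwist]
  exact comp_sub_sub_comp_sub_mem_polyDegLT hgd _ _

theorem lowerCentralSeries_polyTwist_succ_le (n j : ℕ) :
    (polyTwist n).lowerCentralSeries (j + 1) ≤ base ⊓ polyTwist (n - (j + 1)) := by
  induction j with
  | zero =>
    exact Subgroup.commutator_le.2 fun g hg h hh => commutator_mem_base_inf_polyTwist hg hh
  | succ j ih =>
    refine Subgroup.commutator_le.2 fun g hg h _ => ?_
    simpa [Nat.sub_sub] using commutator_mem_base_inf_polyTwist_of_mem (ih hg) h

theorem base_inf_polyTwist_zero : base ⊓ polyTwist 0 = ⊥ := by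
  refine eq_bot_iff.2 fun g hg => ?_
  obtain ⟨hg₀, hg₁⟩ := Subgroup.mem_inf.1 hg
  rw [mem_polyTwist, mem_polyDegLT, iterate_zero, id] at hg₁
  exact IntWreath.ext hg₀ hg₁

theorem lowerCentralSeries_polyTwist_eq_bot (n : ℕ) :
    (polyTwist (n + 1)).lowerCentralSeries (n + 1) = ⊥ :=
  eq_bot_iff.2 ((lowerCentralSeries_polyTwist_succ_le _ n).trans
    (by simp [base_inf_polyTwist_zero]))

def translation : IntWreath := ⟨1, 0⟩

theorem translation_mem_polyTwist (d : ℕ) : translation ∈ polyTwist d := zero_mem (polyDegLT d)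

theorem commutator_translation_twist {g : IntWreath} (hg : g ∈ base) :
    ⁅g, translation⁆.twist = fun k => Δ_[1] g.twist (k - 1) := by
  rw [commutator_twist, mem_base.1 hg]
  funext k
  simp [translation, fwdDiff]

theorem exists_mem_lowerCentralSeries_polyTwist (n j : ℕ) :
    ∃ g ∈ (polyTwist (n + 1)).lowerCentralSeries j, g ∈ base ∧
      g.twist = fun k => Δ_[1] ^[j] (fun r : ℤ => r ^ n) (k - j) := by
  induction j with
  | zero =>
    refine ⟨⟨0, fun r : ℤ => r ^ n⟩, ?_, rfl, by simp⟩
    exact mem_polyDegLT.2 (fwdDiff_iter_pow_eq_zero_of_lt n.lt_succ_self)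
  | succ j ih =>
    obtain ⟨g, hg, hg₀, hgtwist⟩ := ih
    refine ⟨⁅g, translation⁆,
      Subgroup.commutator_mem_commutator hg (translation_mem_polyTwist _),
      commutator_shift _ _, ?_⟩
    rw [commutator_translation_twist hg₀, hgtwist]
    funext k
    simp only [iterate_succ_apply', fwdDiff, Nat.cast_succ, sub_add_eq_sub_sub, sub_add_cancel,
      sub_right_comm k 1]

theorem lowerCentralSeries_polyTwist_ne_bot (n : ℕ) :
    (polyTwist (n + 1)).lowerCentralSeries n ≠ ⊥ := by
  obtain ⟨g, hg, -, hgtwist⟩ := exists_mem_lowerCentralSeries_polyTwist n n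
  rw [fwdDiff_iter_eq_factorial] at hgtwist
  refine fun hbot => n.factorial_ne_zero ?_
  have := congrFun hgtwist 0
  rw [hbot, Subgroup.mem_bot] at hg
  simpa [hg] using this.symm

end IntWreath

section Diffeo

variable {n : WithTop ℕ∞}

theorem isDiffeoR_id : IsDiffeoR n id :=
  ⟨Function.bijective_id, contDiff_id, fun x => by simp⟩

theorem isDiffeoR_add_const (c : ℝ) : IsDiffeoR n (· + c) :=
  ⟨(Equiv.addRight c).bijective, contDiff_id.add contDiff_const, fun x => by simp⟩

theorem IsDiffeoR.comp {f g : ℝ → ℝ} (hf : IsDiffeoR n f) (hg : IsDiffeoR n g)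
    (hn : n ≠ 0) : IsDiffeoR n (f ∘ g) := by
  refine ⟨hf.1.comp hg.1, hf.2.1.comp hg.2.1, fun x => ?_⟩
  rw [deriv_comp x (hf.2.1.differentiable hn _) (hg.2.1.differentiable hn _)]
  exact mul_pos (hf.2.2 _) (hg.2.2 _)

theorem IsDiffeoR.symm {e : ℝ ≃ ℝ} (he : IsDiffeoR n e) (hn : n ≠ 0) :
    IsDiffeoR n e.symm := by
  obtain ⟨-, hsmooth, hpos⟩ := he
  have hdiff := hsmooth.differentiable hn
  have hmono : StrictMono e := strictMono_of_deriv_pos hpos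
  let E : ℝ ≃ₜ ℝ :=
    { e with
      continuous_toFun := hdiff.continuous
      continuous_invFun := (Monotone.continuous_of_surjective
        (fun a b hab => by simpa using hmono.le_iff_le.1 (by simpa using hab))
        e.symm.surjective) }
  have hderiv (y : ℝ) : HasDerivAt e.symm (deriv e (e.symm y))⁻¹ y :=
    HasDerivAt.of_local_left_inverse E.symm.continuous.continuousAt
      (hdiff _).hasDerivAt (hpos _).ne' (Eventually.of_forall e.apply_symm_apply)
  refine ⟨e.symm.bijective, ?_, fun y => ?_⟩
  · exact E.contDiff_symm_deriv (fun x => (hpos x).ne') (fun x => (hdiff x).hasDerivAt) hsmooth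
  · rw [(hderiv y).deriv]
    exact inv_pos.2 (hpos _)

def diffeoSubgroup : Subgroup (Equiv.Perm ℝ) where
  carrier := {e | IsDiffeoR ∞ e}
  one_mem' := isDiffeoR_id
  mul_mem' ha hb := ha.comp hb (by simp)
  inv_mem' ha := ha.symm (by simp)

theorem exists_isDiffeoR_add_mul {f : ℝ → ℝ} (hf : ContDiff ℝ n f)
    (hfc : HasCompactSupport f) (hn : 1 ≤ n) :
    ∃ ε > 0, IsDiffeoR n (fun x => x + ε * f x) := by
  obtain ⟨C, hC⟩ := (hf.continuous_deriv hn).bounded_above_of_compact_support hfc.deriv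
  have hC0 : 0 ≤ C := (norm_nonneg _).trans (hC 0)
  set ε := (C + 1)⁻¹
  have hε : 0 < ε := by positivity
  have hdiff := hf.differentiable (one_pos.trans_le hn).ne'
  have hderiv (x : ℝ) : HasDerivAt (fun x => x + ε * f x) (1 + ε * deriv f x) x :=
    (hasDerivAt_id x).add ((hdiff x).hasDerivAt.const_mul ε)
  have hpos (x : ℝ) : 0 < deriv (fun x => x + ε * f x) x := by
    have hεC : ε * C < 1 := by
      rw [inv_mul_lt_one₀ (by positivity)]
      linarith
    have hlower : ε * -C ≤ ε * deriv f x :=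
      mul_le_mul_of_nonneg_left ((neg_abs_le _).trans' (neg_le_neg (hC x))) hε.le
    rw [(hderiv x).deriv]
    linarith
  have hzero := hfc.is_zero_at_infty
  have hsurj : Function.Surjective (fun x => x + ε * f x) := by
    refine Continuous.surjective (continuous_id.add (continuous_const.mul hf.continuous)) ?_ ?_
    · simpa using tendsto_id.atTop_add ((hzero.mono_left atTop_le_cocompact).const_mul ε)
    · simpa using tendsto_id.atBot_add ((hzero.mono_left atBot_le_cocompact).const_mul ε)
  exact ⟨ε, hε, ⟨(strictMono_of_deriv_pos hpos).injective, hsurj⟩,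
    contDiff_id.add (contDiff_const.mul hf), hpos⟩

end Diffeo

def middlePerms : Subgroup (Equiv.Perm ℝ) :=
  fixingSubgroup (Equiv.Perm ℝ) (Ioo (1/4 : ℝ) (3/4))ᶜ

theorem apply_eq_self_of_mem_middlePerms {e : Equiv.Perm ℝ} (he : e ∈ middlePerms) {x : ℝ}
    (hx : x ∉ Ioo (1/4 : ℝ) (3/4)) : e x = x :=
  he ⟨x, hx⟩

theorem mem_Ico_of_mem_middlePerms {e : Equiv.Perm ℝ} (he : e ∈ middlePerms) {x : ℝ}
    (hx : x ∈ Ico 0 1) : e x ∈ Ico 0 1 := by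
  by_cases hmid : x ∈ Ioo (1/4 : ℝ) (3/4)
  · have hmem : e x ∈ Ioo (1/4 : ℝ) (3/4) :=
      orbit_fixingSubgroup_compl_subset (Equiv.Perm ℝ) ℝ hmid ⟨⟨e, he⟩, rfl⟩
    exact ⟨by linarith [hmem.1], by linarith [hmem.2]⟩
  · rwa [apply_eq_self_of_mem_middlePerms he hmid]

theorem eq_zero_of_zpow_apply_eq_self {α : Type*} [Preorder α] {φ : Equiv.Perm α}
    (hle : ∀ x, x ≤ φ x) {a : α} (hlt : a < φ a) {j : ℤ} (h : (φ ^ j) a = a) : j = 0 := by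
  have hpow (m : ℕ) : a < (φ ^ (m + 1)) a := by
    rw [pow_succ, Equiv.Perm.mul_apply]
    refine hlt.trans_le ?_
    clear hlt h
    induction m generalizing a with
    | zero => exact le_rfl
    | succ m ih => rw [pow_succ, Equiv.Perm.mul_apply]; exact (hle _).trans ih
  obtain ⟨m, rfl | rfl⟩ := Int.eq_nat_or_neg j <;> obtain _ | m := m
  · rfl
  · rw [zpow_natCast] at h
    exact absurd h (hpow m).ne'
  · rfl
  · rw [zpow_neg, zpow_natCast, Equiv.Perm.inv_eq_iff_eq] at h
    exact absurd h (hpow m).ne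

theorem exists_mem_diffeoSubgroup_inf_middlePerms : ∃ φ ∈ diffeoSubgroup ⊓ middlePerms,
    ∀ j : ℤ, (φ ^ j) (1/2) = 1/2 → j = 0 := by
  let b : ContDiffBump (1/2 : ℝ) := ⟨1/8, 1/4, by norm_num, by norm_num⟩
  obtain ⟨ε, hε, hφ⟩ := exists_isDiffeoR_add_mul (n := ∞) b.contDiff b.hasCompactSupport
    (by simp)
  refine ⟨Equiv.ofBijective _ hφ.1, ⟨hφ, fun ⟨x, hx⟩ => ?_⟩,
    fun j => eq_zero_of_zpow_apply_eq_self (fun x => ?_) ?_⟩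
  · have : b x = 0 := by
      rw [← Function.notMem_support, b.support_eq, Real.ball_eq_Ioo]
      convert hx using 2
      norm_num
    simp [Equiv.Perm.smul_def, this]
  · simpa using mul_nonneg hε.le b.nonneg
  · have hb : b (1/2) = 1 := b.one_of_mem_closedBall (Metric.mem_closedBall_self (by norm_num))
    change 1/2 < 1/2 + ε * b (1/2)
    rw [hb]
    linarith

section Glue

variable {n : WithTop ℕ∞} (u v : ℤ → middlePerms)

noncomputable def glue (x : ℝ) : ℝ := ⌊x⌋ + (u ⌊x⌋ : Equiv.Perm ℝ) (Int.fract x)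

theorem floor_glue (x : ℝ) : ⌊glue u x⌋ = ⌊x⌋ := by
  have h := mem_Ico_of_mem_middlePerms (u ⌊x⌋).2 ⟨Int.fract_nonneg x, Int.fract_lt_one x⟩
  rw [glue, Int.floor_intCast_add, Int.floor_eq_zero_iff.2 h, add_zero]

theorem fract_glue (x : ℝ) :
    Int.fract (glue u x) = (u ⌊x⌋ : Equiv.Perm ℝ) (Int.fract x) := by
  have h := mem_Ico_of_mem_middlePerms (u ⌊x⌋).2 ⟨Int.fract_nonneg x, Int.fract_lt_one x⟩
  rw [glue, Int.fract_intCast_add, Int.fract_eq_self.2 h]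

theorem glue_glue (x : ℝ) : glue u (glue v x) = glue (u * v) x := by
  rw [glue, floor_glue, fract_glue]
  rfl

theorem glue_one (x : ℝ) : glue 1 x = x := Int.floor_add_fract x

theorem glue_add_intCast (x : ℝ) (m : ℤ) :
    glue u (x + m) = glue (fun k => u (k + m)) x + m := by
  simp only [glue, Int.floor_add_intCast, Int.fract_add_intCast, Int.cast_add]
  ring

noncomputable def gluePerm : Equiv.Perm ℝ where
  toFun := glue u
  invFun := glue u⁻¹
  left_inv x := by rw [glue_glue, inv_mul_cancel, glue_one]
  right_inv x := by rw [glue_glue, mul_inv_cancel, glue_one]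

@[simp] theorem gluePerm_apply (x : ℝ) : gluePerm u x = glue u x := rfl

/-- On `(k - 1/4, k)` both sides are the identity, so the model extends past the left end of the
block to an open set. -/
theorem glue_eqOn (k : ℤ) :
    EqOn (glue u) (fun y => k + (u k : Equiv.Perm ℝ) (y - k)) (Ioo (k - 1/4) (k + 1)) := by
  rintro y ⟨hy₁, hy₂⟩
  rcases le_or_gt (k : ℝ) y with hky | hky
  · rw [glue, Int.fract, Int.floor_eq_iff.2 ⟨hky, hy₂⟩]
  · have hfloor : ⌊y⌋ = k - 1 :=
      Int.floor_eq_iff.2 ⟨by push_cast; linarith, by push_cast; linarith⟩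
    have h₁ : y - ⌊y⌋ ∉ Ioo (1/4 : ℝ) (3/4) := fun h => by
      rw [hfloor] at h; push_cast at h; linarith [h.2]
    have h₂ : y - k ∉ Ioo (1/4 : ℝ) (3/4) := fun h => by linarith [h.1]
    simp only [glue, Int.fract, apply_eq_self_of_mem_middlePerms (u _).2 h₁,
      apply_eq_self_of_mem_middlePerms (u _).2 h₂]
    ring

theorem isDiffeoR_gluePerm (hu : ∀ k, IsDiffeoR n (u k : Equiv.Perm ℝ)) :
    IsDiffeoR n (gluePerm u) := by
  have hloc (x : ℝ) :
      glue u =ᶠ[𝓝 x] fun y => ⌊x⌋ + (u ⌊x⌋ : Equiv.Perm ℝ) (y - ⌊x⌋) := by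
    refine (glue_eqOn u ⌊x⌋).eventuallyEq_of_mem (isOpen_Ioo.mem_nhds ⟨?_, ?_⟩)
    · linarith [Int.floor_le x]
    · exact Int.lt_floor_add_one x
  refine ⟨(gluePerm u).bijective, contDiff_iff_contDiffAt.2 fun x => ?_, fun x => ?_⟩
  · exact ((contDiff_const.add ((hu _).2.1.comp (contDiff_id.sub contDiff_const))).contDiffAt
      ).congr_of_eventuallyEq (hloc x)
  · change 0 < deriv (glue u) x
    rw [(hloc x).deriv_eq, deriv_const_add, deriv_comp_sub_const]
    exact (hu _).2.2 _

end Glue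

namespace IntWreath

variable (φ : middlePerms)

noncomputable def toPerm : IntWreath →* Equiv.Perm ℝ :=
  MonoidHom.mk' (fun g => Equiv.addRight (g.shift : ℝ) * gluePerm (fun k => φ ^ g.twist k))
    fun g h => by
      have htwist : (fun k => φ ^ (g * h).twist k) =
          (fun k => φ ^ g.twist (k + h.shift)) * fun k => φ ^ h.twist k :=
        funext fun k => zpow_add _ _ _
      ext x
      simp only [Equiv.Perm.mul_apply, Equiv.coe_addRight, gluePerm_apply]
      rw [htwist, glue_add_intCast, glue_glue, mul_shift, Int.cast_add]
      ring

theorem toPerm_apply (g : IntWreath) (x : ℝ) :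
    toPerm φ g x = glue (fun k => φ ^ g.twist k) x + g.shift := rfl

theorem toPerm_mem_diffeoSubgroup (hφ : (φ : Equiv.Perm ℝ) ∈ diffeoSubgroup) (g : IntWreath) :
    toPerm φ g ∈ diffeoSubgroup :=
  mul_mem (isDiffeoR_add_const _) (isDiffeoR_gluePerm _ fun k => zpow_mem hφ (g.twist k))

theorem toPerm_injective (hφ : ∀ j : ℤ, ((φ : Equiv.Perm ℝ) ^ j) (1/2) = 1/2 → j = 0) :
    Function.Injective (toPerm φ) := by
  refine (injective_iff_map_eq_one _).2 fun g hg => ?_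
  have hfix (x : ℝ) : glue (fun k => φ ^ g.twist k) x + g.shift = x := by
    rw [← toPerm_apply, hg, Equiv.Perm.one_apply]
  have hshift : g.shift = 0 := by
    have h0 := hfix 0
    rw [glue, Int.fract_zero, Int.floor_zero, apply_eq_self_of_mem_middlePerms (φ ^ _).2
      (by norm_num)] at h0
    exact_mod_cast (by simpa using h0 : (g.shift : ℝ) = 0)
  refine IntWreath.ext hshift (funext fun k => hφ _ ?_)
  have hk := hfix (k + 1/2)
  have hfloor : ⌊(k : ℝ) + 1/2⌋ = k := by rw [Int.floor_intCast_add]; norm_num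
  rw [glue, hfloor, Int.fract_intCast_add, Int.fract_eq_self.2 (by norm_num), hshift] at hk
  simpa using hk

end IntWreath

/-- For every positive integer `n`, the group of orientation-preserving `C^∞`
diffeomorphisms of `ℝ` contains a nilpotent subgroup whose nilpotency class is
exactly `n`: there is a group `G`, acting faithfully on `ℝ` by
orientation-preserving `C^∞` diffeomorphisms, whose lower central series (with
`γ₁ = G`) satisfies `γ_{n+1} = 1` and `γ_n ≠ 1`. -/
theorem smooth_diffeos_R_contains_nilpotent_of_every_class
    (n : ℕ) (hn : 0 < n) :
    ∃ (G : Type) (_ : Group G) (ρ : G → ℝ → ℝ),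
      (∀ g h : G, ρ (g * h) = ρ g ∘ ρ h) ∧
      (ρ 1 = id) ∧
      (∀ g : G, IsDiffeoR ∞ (ρ g)) ∧
      (∀ g : G, ρ g = id → g = 1) ∧
      Subgroup.lowerCentralSeries (⊤ : Subgroup G) n = ⊥ ∧ Subgroup.lowerCentralSeries (⊤ : Subgroup G) (n - 1) ≠ ⊥ := by
  obtain ⟨m, rfl⟩ := Nat.exists_eq_add_one_of_ne_zero hn.ne'
  obtain ⟨φ, hφ, hφ_free⟩ := exists_mem_diffeoSubgroup_inf_middlePerms
  let ρ := IntWreath.toPerm ⟨φ, hφ.2⟩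
  refine ⟨IntWreath.polyTwist (m + 1), inferInstance, fun g => ρ g, fun g h => by simp,
    by simp, fun g => IntWreath.toPerm_mem_diffeoSubgroup _ hφ.1 g, fun g hg => ?_, ?_, ?_⟩
  · refine Subtype.ext (IntWreath.toPerm_injective ⟨φ, hφ.2⟩ hφ_free (Equiv.ext fun x => ?_))
    simpa using congrFun hg x
  · rw [Subgroup.top_lowerCentralSeries_eq_bot_iff]
    exact IntWreath.lowerCentralSeries_polyTwist_eq_bot m
  · rw [Nat.add_sub_cancel, Ne, Subgroup.top_lowerCentralSeries_eq_bot_iff]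
    exact IntWreath.lowerCentralSeries_polyTwist_ne_bot m
end
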